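/- If E ⊆ ℝ is Lebesgue measurable and p ∈ ℝ, then the I-density of E at p exists if and only if I-d^−(p,E) + I-d^−(p,E^c) = 1, where I-d^− denotes the upper I-density. -/
import Mathlib


open MeasureTheory Set
open scoped ENNReal

/-- A nontrivial admissible ideal of subsets of ℕ. -/
structure NAIdeal where
  carrier : Set (Set ℕ)
  downward : ∀ A ∈ carrier, ∀ B, B ⊆ A → B ∈ carrier
  unionMem : ∀ A ∈ carrier, ∀ B ∈ carrier, A ∪ B ∈ carrier
  admissible : ∀ n : ℕ, {n} ∈ carrier
  nontriv : (Set.univ : Set ℕ) ∉ carrier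

/-- I-limit superior of a real sequence, in the extended reals
(sSup of the empty set is ⊥, matching the convention −∞). -/
noncomputable def Ilimsup (I : NAIdeal) (x : ℕ → ℝ) : EReal :=
  sSup ((fun b : ℝ => (b : EReal)) '' {b : ℝ | {k | x k > b} ∉ I.carrier})

/-- I-limit inferior of a real sequence, in the extended reals
(sInf of the empty set is ⊤, matching the convention +∞). -/
noncomputable def Iliminf (I : NAIdeal) (x : ℕ → ℝ) : EReal :=
  sInf ((fun a : ℝ => (a : EReal)) '' {a : ℝ | {k | x k < a} ∉ I.carrier})

/-- I-boundedness of a real sequence. -/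
def IBounded (I : NAIdeal) (x : ℕ → ℝ) : Prop :=
  ∃ M > (0 : ℝ), {k | |x k| > M} ∈ I.carrier

/-- `J` is a sequence of closed intervals about the point `p`. -/
def AboutP (p : ℝ) (J : ℕ → Set ℝ) : Prop :=
  ∀ n, p ∈ J n ∧ ∃ a b : ℝ, J n = Set.Icc a b

/-- The admissibility condition 𝒮(J) = {n : 0 < λ(Jₙ) < 1/n} ∈ F(I),
i.e. its complement lies in the ideal. -/
def AdmSeq (I : NAIdeal) (J : ℕ → Set ℝ) : Prop :=
  {n : ℕ | 0 < volume (J n) ∧ volume (J n) < 1 / (n : ℝ≥0∞)}ᶜ ∈ I.carrier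

/-- The sequence of ratios λ(Jₙ ∩ E)/λ(Jₙ). -/
noncomputable def ratioSeq (E : Set ℝ) (J : ℕ → Set ℝ) (n : ℕ) : ℝ :=
  (volume (J n ∩ E)).toReal / (volume (J n)).toReal

/-- Lower I-density of `E` at `p`. -/
noncomputable def lowerIDensity (I : NAIdeal) (p : ℝ) (E : Set ℝ) : EReal :=
  sInf {v : EReal | ∃ J : ℕ → Set ℝ, AboutP p J ∧ AdmSeq I J ∧ v = Iliminf I (ratioSeq E J)}

/-- Upper I-density of `E` at `p`. -/
noncomputable def upperIDensity (I : NAIdeal) (p : ℝ) (E : Set ℝ) : EReal :=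
  sSup {v : EReal | ∃ J : ℕ → Set ℝ, AboutP p J ∧ AdmSeq I J ∧ v = Ilimsup I (ratioSeq E J)}

/-- Θ_I(E): the set of points where `E` has lower I-density 1. -/
def Theta (I : NAIdeal) (E : Set ℝ) : Set ℝ :=
  {x : ℝ | lowerIDensity I x E = 1}

lemma empty_mem (I : NAIdeal) : (∅ : Set ℕ) ∈ I.carrier :=
  I.downward _ (I.admissible 0) ∅ (Set.empty_subset _)

lemma mem_congr (I : NAIdeal) {C : Set ℕ} (hC : C ∈ I.carrier) {A B : Set ℕ}
    (h1 : A ⊆ B ∪ C) (h2 : B ⊆ A ∪ C) : (A ∈ I.carrier ↔ B ∈ I.carrier) :=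
  ⟨fun hA => I.downward _ (I.unionMem _ hA _ hC) _ h2,
   fun hB => I.downward _ (I.unionMem _ hB _ hC) _ h1⟩

lemma one_sub_one_sub (x : EReal) : 1 - (1 - x) = x := by
  induction x using EReal.rec with
  | bot => rfl
  | top => rfl
  | coe a => norm_cast; ring

lemma one_sub_anti {x y : EReal} (h : x ≤ y) : 1 - y ≤ 1 - x :=
  EReal.sub_le_sub le_rfl h

lemma sSup_one_sub (T : Set EReal) :
    sSup ((fun v => (1:EReal) - v) '' T) = 1 - sInf T := by
  apply le_antisymm
  · exact sSup_le (by rintro _ ⟨v, hv, rfl⟩; exact one_sub_anti (sInf_le hv))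
  · have h1 : 1 - sSup ((fun v => (1:EReal) - v) '' T) ≤ sInf T := by
      apply le_sInf; intro v hv
      have h := one_sub_anti (le_sSup (Set.mem_image_of_mem (fun v => (1:EReal) - v) hv))
      rwa [one_sub_one_sub] at h
    have h := one_sub_anti h1
    rwa [one_sub_one_sub] at h

lemma exists_real_of_bounds {s : EReal} (h0 : 0 ≤ s) (h1 : s ≤ 1) :
    ∃ u : ℝ, s = ↑u ∧ 0 ≤ u ∧ u ≤ 1 := by
  have hb : s ≠ ⊥ := by rintro rfl; simp at h0
  have ht : s ≠ ⊤ :=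
    (lt_of_le_of_lt h1 (by rw [← EReal.coe_one]; exact EReal.coe_lt_top 1)).ne
  refine ⟨s.toReal, (EReal.coe_toReal ht hb).symm, ?_, ?_⟩
  · rw [← EReal.coe_toReal ht hb] at h0; exact_mod_cast h0
  · rw [← EReal.coe_toReal ht hb] at h1; exact_mod_cast h1

lemma ratio_nonneg (E : Set ℝ) (J : ℕ → Set ℝ) (n : ℕ) : 0 ≤ ratioSeq E J n :=
  div_nonneg ENNReal.toReal_nonneg ENNReal.toReal_nonneg

lemma ratio_le_one (E : Set ℝ) (J : ℕ → Set ℝ) (n : ℕ) : ratioSeq E J n ≤ 1 := by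
  unfold ratioSeq
  rcases eq_or_ne (volume (J n)) ⊤ with h | h
  · simp [h]
  · exact div_le_one_of_le₀
      (ENNReal.toReal_mono h (measure_mono Set.inter_subset_left)) ENNReal.toReal_nonneg

lemma Ilimsup_nonneg (I : NAIdeal) {x : ℕ → ℝ} (h0 : ∀ k, 0 ≤ x k) :
    0 ≤ Ilimsup I x := by
  by_contra hcon
  push_neg at hcon
  have hb : ∀ b : ℝ, b < 0 → (b : EReal) ≤ Ilimsup I x := by
    intro b hb
    apply le_sSup
    refine ⟨b, ?_, rfl⟩
    have huniv : {k | x k > b} = Set.univ := by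
      ext k
      simp only [Set.mem_setOf_eq, Set.mem_univ, iff_true]
      exact lt_of_lt_of_le hb (h0 k)
    simp only [Set.mem_setOf_eq, huniv]
    exact I.nontriv
  have hm1 := hb (-1) (by norm_num)
  have hne1 : Ilimsup I x ≠ ⊥ := (lt_of_lt_of_le (EReal.bot_lt_coe (-1)) hm1).ne'
  have hne2 : Ilimsup I x ≠ ⊤ := fun htop => by rw [htop] at hcon; simp at hcon
  obtain ⟨t, ht⟩ : ∃ t : ℝ, Ilimsup I x = ↑t :=
    ⟨(Ilimsup I x).toReal, (EReal.coe_toReal hne2 hne1).symm⟩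
  rw [ht] at hcon
  have ht0 : t < 0 := by exact_mod_cast hcon
  have h2 := hb (t/2) (by linarith)
  rw [ht, EReal.coe_le_coe_iff] at h2
  linarith

lemma Ilimsup_le_one (I : NAIdeal) {x : ℕ → ℝ} (h1 : ∀ k, x k ≤ 1) :
    Ilimsup I x ≤ 1 := by
  apply sSup_le
  rintro _ ⟨b, hbmem, rfl⟩
  simp only [Set.mem_setOf_eq] at hbmem
  have hb1 : b ≤ 1 := by
    by_contra hgt
    push_neg at hgt
    apply hbmem
    have he : {k | x k > b} = ∅ := by
      ext k
      simp only [Set.mem_setOf_eq, Set.mem_empty_iff_false, iff_false, not_lt]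
      exact le_trans (h1 k) hgt.le
    rw [he]
    exact empty_mem I
  show (b : EReal) ≤ 1
  exact_mod_cast hb1

lemma Iliminf_nonneg (I : NAIdeal) {x : ℕ → ℝ} (h0 : ∀ k, 0 ≤ x k) :
    0 ≤ Iliminf I x := by
  apply le_sInf
  rintro _ ⟨a, hamem, rfl⟩
  simp only [Set.mem_setOf_eq] at hamem
  have ha : 0 ≤ a := by
    by_contra hlt
    push_neg at hlt
    apply hamem
    have he : {k | x k < a} = ∅ := by
      ext k
      simp only [Set.mem_setOf_eq, Set.mem_empty_iff_false, iff_false, not_lt]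
      exact le_trans hlt.le (h0 k)
    rw [he]
    exact empty_mem I
  show (0:EReal) ≤ (a : EReal)
  exact_mod_cast ha

lemma Iliminf_le_one (I : NAIdeal) {x : ℕ → ℝ} (h1 : ∀ k, x k ≤ 1) :
    Iliminf I x ≤ 1 := by
  by_contra hcon
  push_neg at hcon
  have hb : ∀ a : ℝ, 1 < a → Iliminf I x ≤ (a : EReal) := by
    intro a ha
    apply sInf_le
    refine ⟨a, ?_, rfl⟩
    have huniv : {k | x k < a} = Set.univ := by
      ext k
      simp only [Set.mem_setOf_eq, Set.mem_univ, iff_true]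
      exact lt_of_le_of_lt (h1 k) ha
    simp only [Set.mem_setOf_eq, huniv]
    exact I.nontriv
  have hm2 := hb 2 (by norm_num)
  have hne2 : Iliminf I x ≠ ⊤ := fun htop => by rw [htop] at hm2; simp at hm2
  have hne1 : Iliminf I x ≠ ⊥ := fun hbot => by
    rw [hbot] at hcon
    exact absurd hcon (by simp)
  obtain ⟨t, ht⟩ : ∃ t : ℝ, Iliminf I x = ↑t :=
    ⟨(Iliminf I x).toReal, (EReal.coe_toReal hne2 hne1).symm⟩
  rw [ht] at hcon
  have ht1 : 1 < t := by exact_mod_cast hcon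
  have h2 := hb ((1+t)/2) (by linarith)
  rw [ht, EReal.coe_le_coe_iff] at h2
  linarith

lemma Ilimsup_compl (I : NAIdeal) {E : Set ℝ} (hE : MeasurableSet E) {J : ℕ → Set ℝ}
    (hAdm : AdmSeq I J) :
    Ilimsup I (ratioSeq Eᶜ J) = 1 - Iliminf I (ratioSeq E J) := by
  set C := {n : ℕ | 0 < volume (J n) ∧ volume (J n) < 1 / (n : ℝ≥0∞)}ᶜ with hCdef
  have hC : C ∈ I.carrier := hAdm
  have key : ∀ n, n ∉ C → ratioSeq Eᶜ J n = 1 - ratioSeq E J n := by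
    intro n hn
    simp only [hCdef, Set.mem_compl_iff, Set.mem_setOf_eq, not_not] at hn
    obtain ⟨hpos, hlt⟩ := hn
    have hfin : volume (J n) ≠ ⊤ := ne_top_of_lt hlt
    have hsum : volume (J n ∩ E) + volume (J n ∩ Eᶜ) = volume (J n) := by
      have h := measure_inter_add_diff (μ := volume) (J n) hE
      rwa [Set.diff_eq] at h
    have h1 : volume (J n ∩ E) ≠ ⊤ :=
      ne_top_of_le_ne_top hfin (measure_mono Set.inter_subset_left)
    have h2 : volume (J n ∩ Eᶜ) ≠ ⊤ :=
      ne_top_of_le_ne_top hfin (measure_mono Set.inter_subset_left)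
    have htr : (volume (J n ∩ E)).toReal + (volume (J n ∩ Eᶜ)).toReal
        = (volume (J n)).toReal := by
      rw [← ENNReal.toReal_add h1 h2, hsum]
    have hvpos : 0 < (volume (J n)).toReal := ENNReal.toReal_pos hpos.ne' hfin
    unfold ratioSeq
    field_simp
    linarith
  have hsets : ∀ b : ℝ,
      ({k | ratioSeq Eᶜ J k > b} ∈ I.carrier ↔ {k | ratioSeq E J k < 1 - b} ∈ I.carrier) := by
    intro b
    apply mem_congr I hC
    · intro k hk
      by_cases hkC : k ∈ C
      · exact Or.inr hkC
      · left
        simp only [Set.mem_setOf_eq] at hk ⊢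
        rw [key k hkC] at hk
        linarith
    · intro k hk
      by_cases hkC : k ∈ C
      · exact Or.inr hkC
      · left
        simp only [Set.mem_setOf_eq] at hk ⊢
        rw [key k hkC]
        linarith
  have himg : ((fun b : ℝ => (b : EReal)) '' {b : ℝ | {k | ratioSeq Eᶜ J k > b} ∉ I.carrier})
      = (fun v => (1:EReal) - v) ''
        ((fun a : ℝ => (a : EReal)) '' {a : ℝ | {k | ratioSeq E J k < a} ∉ I.carrier}) := by
    ext v
    constructor
    · rintro ⟨b, hb, rfl⟩
      simp only [Set.mem_setOf_eq] at hb
      refine ⟨((1 - b : ℝ) : EReal), ⟨1 - b, ?_, rfl⟩, ?_⟩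
      · simp only [Set.mem_setOf_eq]
        exact fun hmem => hb ((hsets b).mpr hmem)
      · show (1:EReal) - ((1 - b : ℝ) : EReal) = ((b : ℝ) : EReal)
        norm_cast
        ring
    · rintro ⟨_, ⟨a, ha, rfl⟩, rfl⟩
      simp only [Set.mem_setOf_eq] at ha
      refine ⟨1 - a, ?_, ?_⟩
      · simp only [Set.mem_setOf_eq]
        intro hmem
        have h := (hsets (1 - a)).mp hmem
        rw [show (1 - (1 - a) : ℝ) = a by ring] at h
        exact ha h
      · show ((1 - a : ℝ) : EReal) = (1:EReal) - ((a : ℝ) : EReal)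
        norm_cast
  rw [Ilimsup, himg, sSup_one_sub, Iliminf]

lemma exists_adm (I : NAIdeal) (p : ℝ) : ∃ J : ℕ → Set ℝ, AboutP p J ∧ AdmSeq I J := by
  refine ⟨fun n => Set.Icc (p - 1/(4*((n:ℝ)+1))) (p + 1/(4*((n:ℝ)+1))), ?_, ?_⟩
  · intro n
    have hpos : 0 < 1/(4*((n:ℝ)+1)) := by positivity
    exact ⟨⟨by linarith, by linarith⟩, _, _, rfl⟩
  · have hgood : ∀ n : ℕ,
        0 < volume (Set.Icc (p - 1/(4*((n:ℝ)+1))) (p + 1/(4*((n:ℝ)+1)))) ∧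
        volume (Set.Icc (p - 1/(4*((n:ℝ)+1))) (p + 1/(4*((n:ℝ)+1)))) < 1 / (n : ℝ≥0∞) := by
      intro n
      have hval : volume (Set.Icc (p - 1/(4*((n:ℝ)+1))) (p + 1/(4*((n:ℝ)+1))))
          = ENNReal.ofReal (1/(2*((n:ℝ)+1))) := by
        rw [Real.volume_Icc]
        congr 1
        field_simp
        ring
      rw [hval]
      constructor
      · rw [ENNReal.ofReal_pos]
        positivity
      · rcases Nat.eq_zero_or_pos n with hn | hn
        · simp [hn]
        · have hnR : (0:ℝ) < n := by exact_mod_cast hn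
          have h1n : 1 / (n : ℝ≥0∞) = ENNReal.ofReal (1/(n:ℝ)) := by
            rw [one_div, one_div,
              show ((n:ℕ):ℝ≥0∞) = ENNReal.ofReal ((n:ℕ):ℝ) from (ENNReal.ofReal_natCast n).symm,
              ← ENNReal.ofReal_inv_of_pos hnR]
          rw [h1n, ENNReal.ofReal_lt_ofReal_iff (by positivity)]
          rw [div_lt_div_iff₀ (by positivity) hnR]
          nlinarith
    exact I.downward ∅ (empty_mem I) _ (fun n hn => absurd (hgood n) hn)

lemma upper_compl (I : NAIdeal) {E : Set ℝ} (hE : MeasurableSet E) (p : ℝ) :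
    upperIDensity I p Eᶜ = 1 - lowerIDensity I p E := by
  rw [upperIDensity, lowerIDensity, ← sSup_one_sub]
  congr 1
  ext v
  simp only [Set.mem_setOf_eq, Set.mem_image]
  constructor
  · rintro ⟨J, hJ, hA, rfl⟩
    exact ⟨Iliminf I (ratioSeq E J), ⟨J, hJ, hA, rfl⟩, (Ilimsup_compl I hE hA).symm⟩
  · rintro ⟨w, ⟨J, hJ, hA, rfl⟩, rfl⟩
    exact ⟨J, hJ, hA, (Ilimsup_compl I hE hA).symm⟩

lemma upper_real (I : NAIdeal) (p : ℝ) (E : Set ℝ) :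
    ∃ u : ℝ, upperIDensity I p E = ↑u ∧ 0 ≤ u ∧ u ≤ 1 := by
  apply exists_real_of_bounds
  · obtain ⟨J, hJ, hA⟩ := exists_adm I p
    have hv : Ilimsup I (ratioSeq E J) ∈
        {v : EReal | ∃ J : ℕ → Set ℝ, AboutP p J ∧ AdmSeq I J ∧ v = Ilimsup I (ratioSeq E J)} :=
      ⟨J, hJ, hA, rfl⟩
    exact le_trans (Ilimsup_nonneg I (ratio_nonneg E J)) (le_sSup hv)
  · apply sSup_le
    rintro v ⟨J, hJ, hA, rfl⟩
    exact Ilimsup_le_one I (ratio_le_one E J)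

lemma lower_real (I : NAIdeal) (p : ℝ) (E : Set ℝ) :
    ∃ l : ℝ, lowerIDensity I p E = ↑l ∧ 0 ≤ l ∧ l ≤ 1 := by
  apply exists_real_of_bounds
  · apply le_sInf
    rintro v ⟨J, hJ, hA, rfl⟩
    exact Iliminf_nonneg I (ratio_nonneg E J)
  · obtain ⟨J, hJ, hA⟩ := exists_adm I p
    have hv : Iliminf I (ratioSeq E J) ∈
        {v : EReal | ∃ J : ℕ → Set ℝ, AboutP p J ∧ AdmSeq I J ∧ v = Iliminf I (ratioSeq E J)} :=
      ⟨J, hJ, hA, rfl⟩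
    exact le_trans (sInf_le hv) (Iliminf_le_one I (ratio_le_one E J))

/-- the I-density of E at p exists iff the upper I-densities of E and Eᶜ
at p sum to 1. -/
theorem stmt19 (I : NAIdeal) (E : Set ℝ) (hE : MeasurableSet E) (p : ℝ) :
    lowerIDensity I p E = upperIDensity I p E ↔
      upperIDensity I p E + upperIDensity I p Eᶜ = 1 := by
  obtain ⟨u, hu, hu0, hu1⟩ := upper_real I p E
  obtain ⟨l, hl, hl0, hl1⟩ := lower_real I p E
  rw [upper_compl I hE p, hu, hl,
    show (1:EReal) - (l:EReal) = ((1 - l : ℝ) : EReal) by norm_cast,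
    show (u:EReal) + ((1 - l : ℝ) : EReal) = ((u + (1 - l) : ℝ) : EReal) by norm_cast]
  constructor
  · intro h
    have hlu : l = u := by exact_mod_cast h
    have : (u + (1 - l) : ℝ) = 1 := by linarith
    exact_mod_cast this
  · intro h
    have hsum : (u + (1 - l) : ℝ) = 1 := by exact_mod_cast h
    have : l = u := by linarith
    exact_mod_cast this
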